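/- For the isotropic state ρ(p,d) = p P₊ + (1−p) I/d² on ℂ^d ⊗ ℂ^d with −1/(d²−1) ≤ p ≤ 1, the partial transpose ρ(p,d)^{T_B} is positive semidefinite if and only if p ≤ 1/(d+1), equivalently the singlet fraction F = Tr(ρ P₊) satisfies F ≤ 1/d. -/

import Mathlib

/-!
Partial transposition sends `P₊` to `V / d`, where `V` is the swap of the two tensor factors, and
fixes the identity, so `ρ^{T_B} = a • 1 + b • V` with `a = (1 - p) / d²` and `b = p / d`. Since `V`
is a self-adjoint involution, `1 ± V = (1 ± V)ᴴ (1 ± V) / 2` are positive semidefinite, and hence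
`a • 1 + b • V` is positive semidefinite as soon as `|b| ≤ a`; conversely an antisymmetric vector
`e_{ij} - e_{ji}` is a `-1`-eigenvector of `V`, which forces `b ≤ a`, i.e. `p ≤ 1 / (d + 1)`.
The lower bound on `p` gives `-a ≤ b`. As `P₊` is a projector of trace one, the singlet fraction is
`F = p + (1 - p) / d²`, and `1 / d - F = (1 - p (d + 1)) (d - 1) / d²`.
-/

open Matrix
open scoped ComplexOrder

noncomputable def ptB {m n : ℕ}
    (M : Matrix (Fin m × Fin n) (Fin m × Fin n) ℂ) :
    Matrix (Fin m × Fin n) (Fin m × Fin n) ℂ :=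
  fun p q => M (p.1, q.2) (q.1, p.2)

noncomputable def Pplus (d : ℕ) : Matrix (Fin d × Fin d) (Fin d × Fin d) ℂ :=
  fun p q => (if p.1 = p.2 then 1 else 0) * (if q.1 = q.2 then 1 else 0) / d

lemma Matrix.PosSemidef.nonneg_of_mulVec_eq_smul {𝕜 n : Type*} [RCLike 𝕜] [Fintype n]
    {M : Matrix n n 𝕜} (hM : M.PosSemidef) {x : n → 𝕜} (hx : x ≠ 0) {c : ℝ}
    (h : M *ᵥ x = c • x) : 0 ≤ c := by
  have hx_pos := (RCLike.pos_iff.mp (dotProduct_star_self_pos_iff.mpr hx)).1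
  have h_nonneg := (RCLike.nonneg_iff.mp (hM.dotProduct_mulVec_nonneg x)).1
  rw [h, dotProduct_smul, RCLike.real_smul_eq_coe_mul, RCLike.re_ofReal_mul] at h_nonneg
  exact nonneg_of_mul_nonneg_left h_nonneg hx_pos

section Involution

variable {𝕜 n : Type*} [RCLike 𝕜] [Fintype n] [DecidableEq n] {V : Matrix n n 𝕜}

lemma posSemidef_one_add_of_involutive (hV : V.IsHermitian) (hV2 : V * V = 1) :
    (1 + V).PosSemidef := by
  have h : (1 + V)ᴴ * (1 + V) = (2 : ℝ) • (1 + V) := by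
    simp only [conjTranspose_add, conjTranspose_one, hV.eq, add_mul, mul_add, one_mul, mul_one,
      hV2]
    module
  have h2 := (posSemidef_conjTranspose_mul_self (1 + V)).smul (a := (2⁻¹ : ℝ)) (by norm_num)
  rwa [h, smul_smul, inv_mul_cancel₀ two_ne_zero, one_smul] at h2

lemma posSemidef_smul_one_add_smul_of_involutive (hV : V.IsHermitian) (hV2 : V * V = 1)
    {a b : ℝ} (hab : |b| ≤ a) : (a • 1 + b • V).PosSemidef := by
  have h : a • 1 + b • V = ((a + b) / 2) • (1 + V) + ((a - b) / 2) • (1 + -V) := by module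
  obtain ⟨hb_lower, hb_upper⟩ := abs_le.mp hab
  rw [h]
  exact ((posSemidef_one_add_of_involutive hV hV2).smul (by linarith)).add
    ((posSemidef_one_add_of_involutive hV.neg (by rw [neg_mul_neg, hV2])).smul (by linarith))

lemma Matrix.PosSemidef.le_of_mulVec_eq_neg {a b : ℝ} (h : (a • 1 + b • V).PosSemidef)
    {x : n → 𝕜} (hx : x ≠ 0) (hVx : V *ᵥ x = -x) : b ≤ a := by
  have hx_eigen : (a • 1 + b • V) *ᵥ x = (a - b) • x := by
    rw [add_mulVec, smul_mulVec, smul_mulVec, one_mulVec, hVx]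
    module
  linarith [h.nonneg_of_mulVec_eq_smul hx hx_eigen]

end Involution

section Swap

variable (R n : Type*) [DecidableEq n]

def swapMatrix [Zero R] [One R] : Matrix (n × n) (n × n) R :=
  Equiv.Perm.permMatrix R (Equiv.prodComm n n)

variable {R n}

lemma swapMatrix_apply [Zero R] [One R] (i j : n × n) :
    swapMatrix R n i j = if i.swap = j then 1 else 0 := by
  simp [swapMatrix]

lemma isHermitian_swapMatrix [NonAssocSemiring R] [StarRing R] :
    (swapMatrix R n).IsHermitian := by
  simp [IsHermitian, swapMatrix, Equiv.Perm.inv_def, Equiv.prodComm_symm]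

lemma swapMatrix_mul_self [Fintype n] [NonAssocSemiring R] :
    swapMatrix R n * swapMatrix R n = 1 := by
  have h : Equiv.prodComm n n * Equiv.prodComm n n = 1 := Equiv.ext Prod.swap_swap
  rw [swapMatrix, ← permMatrix_mul, h, permMatrix_one]

lemma swapMatrix_mulVec [Fintype n] [CommRing R] (x : n × n → R) :
    swapMatrix R n *ᵥ x = x ∘ Prod.swap :=
  permMatrix_mulVec _

lemma exists_swapMatrix_mulVec_eq_neg [Fintype n] [Nontrivial n] [CommRing R] [Nontrivial R] :
    ∃ x : n × n → R, x ≠ 0 ∧ swapMatrix R n *ᵥ x = -x := by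
  obtain ⟨i, j, hij⟩ := exists_pair_ne n
  refine ⟨Pi.single (i, j) 1 - Pi.single (j, i) 1, fun h => ?_, ?_⟩
  · simpa [hij] using congr_fun h (i, j)
  · ext k
    simp [swapMatrix_mulVec, Pi.single_apply, Prod.swap_eq_iff_eq_swap]

end Swap

lemma ptB_add {m n : ℕ} (A B : Matrix (Fin m × Fin n) (Fin m × Fin n) ℂ) :
    ptB (A + B) = ptB A + ptB B := rfl

lemma ptB_smul {m n : ℕ} (c : ℂ) (A : Matrix (Fin m × Fin n) (Fin m × Fin n) ℂ) :
    ptB (c • A) = c • ptB A := rfl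

lemma ptB_one {m n : ℕ} : ptB (1 : Matrix (Fin m × Fin n) (Fin m × Fin n) ℂ) = 1 := by
  ext ⟨i, j⟩ ⟨k, l⟩
  simp [ptB, one_apply, eq_comm]

lemma ptB_Pplus (d : ℕ) : ptB (Pplus d) = (d : ℂ)⁻¹ • swapMatrix ℂ (Fin d) := by
  ext ⟨i, j⟩ ⟨k, l⟩
  simp only [ptB, Pplus, swapMatrix_apply, Matrix.smul_apply, smul_eq_mul, Prod.swap_prod_mk,
    Prod.mk.injEq]
  split_ifs <;> simp_all [div_eq_inv_mul, eq_comm]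

def diagonalIndicator (d : ℕ) : Fin d × Fin d → ℂ := fun i => if i.1 = i.2 then 1 else 0

lemma Pplus_eq_smul_vecMulVec (d : ℕ) :
    Pplus d = (d : ℂ)⁻¹ • vecMulVec (diagonalIndicator d) (diagonalIndicator d) := by
  ext i j
  simp [Pplus, diagonalIndicator, vecMulVec_apply, div_eq_inv_mul]

lemma diagonalIndicator_dotProduct_self (d : ℕ) :
    diagonalIndicator d ⬝ᵥ diagonalIndicator d = d := by
  simp [dotProduct, diagonalIndicator, Fintype.sum_prod_type]

lemma Pplus_mul_self {d : ℕ} (hd : d ≠ 0) : Pplus d * Pplus d = Pplus d := by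
  rw [Pplus_eq_smul_vecMulVec, smul_mul_smul, vecMulVec_mul_vecMulVec,
    diagonalIndicator_dotProduct_self, vecMulVec_smul, smul_smul, mul_assoc,
    inv_mul_cancel₀ (Nat.cast_ne_zero.mpr hd), mul_one]

lemma trace_Pplus {d : ℕ} (hd : d ≠ 0) : (Pplus d).trace = 1 := by
  rw [Pplus_eq_smul_vecMulVec, trace_smul, trace_vecMulVec, diagonalIndicator_dotProduct_self,
    smul_eq_mul, inv_mul_cancel₀ (Nat.cast_ne_zero.mpr hd)]

noncomputable def isotropicState (d : ℕ) (p : ℝ) : Matrix (Fin d × Fin d) (Fin d × Fin d) ℂ :=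
  (p : ℂ) • Pplus d + ((1 - p : ℝ) : ℂ) • (((d : ℂ) ^ 2)⁻¹ • 1)

lemma ptB_isotropicState (d : ℕ) (p : ℝ) :
    ptB (isotropicState d p) =
      ((1 - p) / d ^ 2 : ℝ) • 1 + (p / d : ℝ) • swapMatrix ℂ (Fin d) := by
  simp only [isotropicState, ptB_add, ptB_smul, ptB_one, ptB_Pplus]
  push_cast
  module

lemma trace_isotropicState_mul_Pplus {d : ℕ} (hd : d ≠ 0) (p : ℝ) :
    (isotropicState d p * Pplus d).trace = ((p + (1 - p) / d ^ 2 : ℝ) : ℂ) := by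
  rw [isotropicState, add_mul, smul_mul_assoc, smul_mul_assoc, smul_mul_assoc, one_mul,
    Pplus_mul_self hd, trace_add, trace_smul, trace_smul, trace_smul, trace_Pplus hd]
  push_cast
  ring

section Arithmetic

variable {d p : ℝ}

lemma div_le_one_sub_div_sq_iff (hd : 0 < d) : p / d ≤ (1 - p) / d ^ 2 ↔ p ≤ 1 / (d + 1) := by
  rw [div_le_div_iff₀ hd (by positivity), le_div_iff₀ (by positivity)]
  constructor <;> intro h <;> nlinarith

lemma add_one_sub_div_sq_le_inv_iff (hd : 1 < d) :
    p + (1 - p) / d ^ 2 ≤ d⁻¹ ↔ p ≤ 1 / (d + 1) := by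
  rw [show p + (1 - p) / d ^ 2 = (p * d ^ 2 + 1 - p) / d ^ 2 by field_simp; ring,
    inv_eq_one_div, div_le_div_iff₀ (by positivity) (by positivity), le_div_iff₀ (by positivity)]
  have hd_mul : 0 < d * (d - 1) := by nlinarith
  constructor <;> intro h <;> nlinarith

lemma neg_one_sub_div_sq_le_div (hd : 1 < d) (hp : -(1 / (d ^ 2 - 1)) ≤ p) :
    -((1 - p) / d ^ 2) ≤ p / d := by
  rw [← neg_div, div_le_iff₀ (by nlinarith)] at hp
  rw [← neg_div, div_le_div_iff₀ (by positivity) (by positivity)]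
  rcases le_total 0 p with hp_sign | hp_sign <;> nlinarith

end Arithmetic

theorem isotropic_ppt_iff_general (d : ℕ) (hd : 2 ≤ d) (p : ℝ)
    (hp1 : -(1 / ((d : ℝ) ^ 2 - 1)) ≤ p) :
    ((ptB ((p : ℂ) • Pplus d + ((1 - p : ℝ) : ℂ) • (((d : ℂ) ^ 2)⁻¹ •
        (1 : Matrix (Fin d × Fin d) (Fin d × Fin d) ℂ)))).PosSemidef ↔
      p ≤ 1 / ((d : ℝ) + 1)) ∧
    (p ≤ 1 / ((d : ℝ) + 1) ↔
      (((p : ℂ) • Pplus d + ((1 - p : ℝ) : ℂ) • (((d : ℂ) ^ 2)⁻¹ •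
        (1 : Matrix (Fin d × Fin d) (Fin d × Fin d) ℂ))) * Pplus d).trace ≤
        ((d : ℂ))⁻¹) := by
  have hd_real : (1 : ℝ) < d := by exact_mod_cast hd
  have : Nontrivial (Fin d) := Fin.nontrivial_iff_two_le.mpr hd
  change ((ptB (isotropicState d p)).PosSemidef ↔ _) ∧
    (_ ↔ (isotropicState d p * Pplus d).trace ≤ _)
  rw [ptB_isotropicState, trace_isotropicState_mul_Pplus (by omega), ← Complex.ofReal_natCast,
    ← Complex.ofReal_inv, Complex.real_le_real, add_one_sub_div_sq_le_inv_iff hd_real,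
    ← div_le_one_sub_div_sq_iff (by positivity)]
  refine ⟨⟨fun h => ?_, fun h => ?_⟩, Iff.rfl⟩
  · obtain ⟨x, hx, hVx⟩ := exists_swapMatrix_mulVec_eq_neg (R := ℂ) (n := Fin d)
    exact h.le_of_mulVec_eq_neg hx hVx
  · exact posSemidef_smul_one_add_smul_of_involutive isHermitian_swapMatrix swapMatrix_mul_self
      (abs_le.mpr ⟨neg_one_sub_div_sq_le_div hd_real hp1, h⟩)

/-- For the isotropic state `ρ(p,d) = p P₊ + (1−p) I/d²` with
`−1/(d²−1) ≤ p ≤ 1`, the partial transpose is positive semidefinite iff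
`p ≤ 1/(d+1)`, equivalently the singlet fraction `F = Tr(ρ P₊)` satisfies
`F ≤ 1/d`. -/
theorem isotropic_ppt_iff (d : ℕ) (hd : 2 ≤ d) (p : ℝ)
    (hp1 : -(1 / ((d : ℝ) ^ 2 - 1)) ≤ p) (hp2 : p ≤ 1) :
    ((ptB ((p : ℂ) • Pplus d + ((1 - p : ℝ) : ℂ) • (((d : ℂ) ^ 2)⁻¹ •
        (1 : Matrix (Fin d × Fin d) (Fin d × Fin d) ℂ)))).PosSemidef ↔
      p ≤ 1 / ((d : ℝ) + 1)) ∧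
    (p ≤ 1 / ((d : ℝ) + 1) ↔
      (((p : ℂ) • Pplus d + ((1 - p : ℝ) : ℂ) • (((d : ℂ) ^ 2)⁻¹ •
        (1 : Matrix (Fin d × Fin d) (Fin d × Fin d) ℂ))) * Pplus d).trace ≤
        ((d : ℂ))⁻¹) :=
  isotropic_ppt_iff_general d hd p hp1
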